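/- arXiv:2403.01541 — 3 statements merged into one kernel-verified Lean document; each statement's English description precedes it below -/
import Mathlib

section
/- If b₁ and b₂ are elements of order 3 in a group G, then their product g = b₁*b₂ is a generalised 3-torsion element: there exist h, k ∈ G with g*(h*g*h⁻¹)*(k*g*k⁻¹) = 1. -/
theorem product_of_three_torsion {G : Type*} [Group G] (b₁ b₂ : G)
    (h₁ : b₁ ^ 3 = 1) (h₂ : b₂ ^ 3 = 1) :
    ∃ h k : G, (b₁ * b₂) * (h * (b₁ * b₂) * h⁻¹) * (k * (b₁ * b₂) * k⁻¹) = 1 := by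
  refine ⟨b₂⁻¹, b₂, ?_⟩
  have e : b₁ * b₂ * (b₂⁻¹ * (b₁ * b₂) * b₂⁻¹⁻¹) * (b₂ * (b₁ * b₂) * b₂⁻¹)
      = b₁ ^ 2 * b₂ ^ 3 * b₁ := by
    simp [pow_succ, mul_assoc]
  rw [e, h₂, mul_one, ← pow_succ, h₁]
end

section
/- In PSL(2,ℤ) with standard generators a of order 2 and b of order 3, the element g = (ab)² is a generalised 3-torsion element: g*(b⁻¹*g*b)*(b*g*b⁻¹) = 1. -/
/-- Relations for `PSL(2,ℤ) ≅ ⟨a, b | a² = b³ = 1⟩`. -/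
def pslRels : Set (FreeGroup (Fin 2)) :=
  {FreeGroup.of 0 ^ 2, FreeGroup.of 1 ^ 3}

theorem mul_pow_two_mul_conj_mul_conj_eq_one {G : Type*} [Group G] {a b : G}
    (ha : a ^ 2 = 1) (hb : b ^ 3 = 1) :
    (a * b) ^ 2 * (b⁻¹ * (a * b) ^ 2 * b) * (b * (a * b) ^ 2 * b⁻¹) = 1 := by
  rw [sq] at ha
  rw [pow_three'] at hb
  calc (a * b) ^ 2 * (b⁻¹ * (a * b) ^ 2 * b) * (b * (a * b) ^ 2 * b⁻¹)
      = a * b * (a * a) * b * a * (b * b * b) * a * b * a := by rw [sq]; group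
    _ = a * b * b * a * a * b * a := by rw [ha, hb]; group
    _ = a * (b * b * b) * a := by rw [mul_assoc (a * b * b) a, ha]; group
    _ = 1 := by rw [hb, mul_one, ha]

theorem abSquared_genThreeTorsion :
    letI a : PresentedGroup pslRels := PresentedGroup.of 0
    letI b : PresentedGroup pslRels := PresentedGroup.of 1
    letI g := (a * b) ^ 2
    g * (b⁻¹ * g * b) * (b * g * b⁻¹) = 1 :=
  mul_pow_two_mul_conj_mul_conj_eq_one (PresentedGroup.one_of_mem (Set.mem_insert _ _))
    (PresentedGroup.one_of_mem (Set.mem_insert_of_mem _ rfl))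
end

section
/- Let G be a group with a central element h of infinite order and elements e₁, e₂ with e₁³ = h^{μ₁} and e₂³ = h^{μ₂}. If x ∈ ℤ satisfies 3x + μ₁ + μ₂ = 0, then g = e₁e₂h^x is a generalised 3-torsion element of G: g*(e₂⁻¹*g*e₂)*(e₂*g*e₂⁻¹) = 1. -/
theorem genThreeTorsion_in_central_ext {G : Type*} [Group G] (h e₁ e₂ : G)
    (hcent : ∀ x : G, h * x = x * h)
    (hinf : ∀ n : ℤ, h ^ n = 1 → n = 0)
    (μ₁ μ₂ : ℤ) (he₁ : e₁ ^ 3 = h ^ μ₁) (he₂ : e₂ ^ 3 = h ^ μ₂)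
    (x : ℤ) (hx : 3 * x + μ₁ + μ₂ = 0) :
    letI g := e₁ * e₂ * h ^ x
    g * (e₂⁻¹ * g * e₂) * (e₂ * g * e₂⁻¹) = 1 := by
  have hc : ∀ a : G, h ^ x * a = a * h ^ x := fun a =>
    ((show Commute h a from hcent a).zpow_left x).eq
  have hk3 : h ^ x * (h ^ x * h ^ x) = h ^ (3 * x) := by
    rw [← zpow_add, ← zpow_add]; ring_nf
  show (e₁ * e₂ * h ^ x) * (e₂⁻¹ * (e₁ * e₂ * h ^ x) * e₂) *
      (e₂ * (e₁ * e₂ * h ^ x) * e₂⁻¹) = 1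
  generalize h ^ x = k at hc hk3 ⊢
  have hc1 : k * e₁ = e₁ * k := hc e₁
  have hc2 : k * e₂ = e₂ * k := hc e₂
  have hc2i : k * e₂⁻¹ = e₂⁻¹ * k := hc e₂⁻¹
  have hd1 : ∀ b : G, k * (e₁ * b) = e₁ * (k * b) := fun b => by
    rw [← mul_assoc, hc1, mul_assoc]
  have hd2 : ∀ b : G, k * (e₂ * b) = e₂ * (k * b) := fun b => by
    rw [← mul_assoc, hc2, mul_assoc]
  have hd2i : ∀ b : G, k * (e₂⁻¹ * b) = e₂⁻¹ * (k * b) := fun b => by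
    rw [← mul_assoc, hc2i, mul_assoc]
  have key : (e₁ * e₂ * k) * (e₂⁻¹ * (e₁ * e₂ * k) * e₂) *
      (e₂ * (e₁ * e₂ * k) * e₂⁻¹)
      = e₁ * (e₁ * (e₂ * (e₂ * (e₂ * (e₁ * (k * (k * k))))))) := by
    simp only [mul_assoc, hd1, hd2, hd2i, hc1, hc2, hc2i, inv_mul_cancel_left, mul_inv_cancel_left]
  have he₂' : e₂ * e₂ * e₂ = h ^ μ₂ := by rw [← he₂, pow_succ, pow_two]
  have hmu : h ^ μ₂ * (e₁ * h ^ (3 * x)) = e₁ * (h ^ (3 * x) * h ^ μ₂) := by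
    rw [(((show Commute h e₁ from hcent e₁).mul_right
      ((Commute.refl h).zpow_right (3 * x))).zpow_left μ₂).eq, mul_assoc]
  rw [key, hk3,
    show e₂ * (e₂ * (e₂ * (e₁ * h ^ (3 * x)))) = h ^ μ₂ * (e₁ * h ^ (3 * x)) by
      rw [← mul_assoc e₂ e₂, ← mul_assoc (e₂ * e₂) e₂, he₂'],
    hmu, ← zpow_add,
    show e₁ * (e₁ * (e₁ * h ^ (3 * x + μ₂))) = h ^ μ₁ * h ^ (3 * x + μ₂) by
      rw [← mul_assoc e₁ e₁, ← mul_assoc (e₁ * e₁) e₁,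
        show e₁ * e₁ * e₁ = h ^ μ₁ by rw [← he₁, pow_succ, pow_two]],
    ← zpow_add, show μ₁ + (3 * x + μ₂) = 0 by linarith, zpow_zero]
end
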